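/- arXiv:2310.01141 — 5 statements merged into one kernel-verified Lean document; each statement's English description precedes it below -/
import Mathlib

section
/- Let k > m ≥ 1 with k even and gcd(2(2m+1), 2k+1) = 1. Then the set I_{21} = { s ∈ {1,…,m} : s = (2n(2m+1) - (k-m))/(2k+1) for some n ∈ {1,…,k/2} } equals {m}. -/
/-! Doubling the defining equation gives `(2s+1)(2k+1) = (4n+1)(2m+1)`. Since `2m+1` is prime
to `2k+1`, it divides `2s+1`, so `s ≥ m`; and `s = m` is attained at `n = k/2`. -/

lemma odd_mul_odd_eq_of_mul_eq_sub {k m s n : ℤ} (h : s * (2*k+1) = 2*n*(2*m+1) - (k-m)) :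
    (2*s+1) * (2*k+1) = (2*m+1) * (4*n+1) := by
  linear_combination 2 * h

lemma le_of_mul_eq_sub {k m s n : ℤ} (hcop : IsCoprime (2*m+1) (2*k+1)) (hs : 0 ≤ s)
    (h : s * (2*k+1) = 2*n*(2*m+1) - (k-m)) : m ≤ s := by
  have hdvd : 2*m+1 ∣ 2*s+1 :=
    hcop.dvd_of_dvd_mul_right ⟨4*n+1, odd_mul_odd_eq_of_mul_eq_sub h⟩
  have := Int.le_of_dvd (by omega) hdvd
  omega

lemma mul_eq_sub_of_eq_two_mul {k m t : ℤ} (ht : k = 2 * t) :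
    m * (2*k+1) = 2*t*(2*m+1) - (k-m) := by
  subst ht; ring

theorem stmt_9 (k m : ℤ) (hm : 1 ≤ m) (hk : m < k) (hke : Even k)
    (hgcd : Int.gcd (2*(2*m+1)) (2*k+1) = 1) :
    {s : ℤ | 1 ≤ s ∧ s ≤ m ∧ ∃ n : ℤ, 1 ≤ n ∧ n ≤ k/2 ∧
      s*(2*k+1) = 2*n*(2*m+1) - (k-m)} = {m} := by
  have hcop : IsCoprime (2*m+1) (2*k+1) :=
    (Int.isCoprime_iff_gcd_eq_one.mpr hgcd).of_mul_left_right
  obtain ⟨t, ht⟩ := hke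
  ext s
  simp only [Set.mem_ofPred_eq, Set.mem_singleton_iff]
  constructor
  · rintro ⟨hs1, hsm, n, -, -, h⟩
    exact le_antisymm hsm (le_of_mul_eq_sub hcop (by omega) h)
  · rintro rfl
    exact ⟨hm, le_rfl, t, by omega, by omega, mul_eq_sub_of_eq_two_mul (by omega)⟩
end

section
/- Let k > m ≥ 1 with k even and gcd(2(2m+1), 2k+1) = 1. Then there is no integer s ∈ {1,…,m} and integer n ∈ {1,…,k/2} with s·(2k+1) = 2n(2m+1) + (k-m). (I.e., the set I_{11} is empty.) -/
/-! Doubling the defining equation gives `(2s - 1)(2k + 1) = (2m + 1)(4n - 1)`. Since `2m + 1` is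
coprime to `2k + 1`, it must divide `2s - 1`, which is impossible because `0 < 2s - 1 < 2m + 1`. -/

lemma IsCoprime.not_dvd_mul_of_pos_of_lt {a b c : ℤ} (hab : IsCoprime a b) (hc : 0 < c)
    (hca : c < a) : ¬ a ∣ c * b := fun h =>
  hc.ne' (Int.eq_zero_of_abs_lt_dvd (hab.dvd_of_dvd_mul_right h) (by rwa [abs_of_pos hc]))

theorem stmt_10_general (k m : ℤ)
    (hgcd : Int.gcd (2*(2*m+1)) (2*k+1) = 1) :
    ¬ ∃ s n : ℤ, 1 ≤ s ∧ s ≤ m ∧ 1 ≤ n ∧ n ≤ k/2 ∧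
      s*(2*k+1) = 2*n*(2*m+1) + (k-m) := by
  rintro ⟨s, n, hs1, hsm, -, -, heq⟩
  have hcop : IsCoprime (2*m+1) (2*k+1) :=
    (Int.isCoprime_iff_gcd_eq_one.mpr hgcd).of_mul_left_right
  have hdvd : (2*m+1) ∣ (2*s-1)*(2*k+1) := ⟨4*n-1, by linear_combination 2*heq⟩
  exact hcop.not_dvd_mul_of_pos_of_lt (by omega) (by omega) hdvd

theorem stmt_10 (k m : ℤ) (hm : 1 ≤ m) (hk : m < k) (hke : Even k)
    (hgcd : Int.gcd (2*(2*m+1)) (2*k+1) = 1) :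
    ¬ ∃ s n : ℤ, 1 ≤ s ∧ s ≤ m ∧ 1 ≤ n ∧ n ≤ k/2 ∧
      s*(2*k+1) = 2*n*(2*m+1) + (k-m) :=
  stmt_10_general k m hgcd
end

section
/- Let k > m ≥ 1 with k even and gcd(2(2m+1), 2k+1) = 1. Then there is no s ∈ {1,…,m} and n ∈ {k/2+1,…,k} with (2m+1-s)(2k+1) = 2n(2m+1) + (k-m), nor with (2m+1-s)(2k+1) = 2n(2m+1) - (k-m). (I.e., I_{12} = I_{22} = ∅.) -/
theorem stmt_11 (k m : ℤ) (hm : 1 ≤ m) (hk : m < k) (hke : Even k)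
    (hgcd : Int.gcd (2*(2*m+1)) (2*k+1) = 1) :
    (¬ ∃ s n : ℤ, 1 ≤ s ∧ s ≤ m ∧ k/2+1 ≤ n ∧ n ≤ k ∧
      (2*m+1-s)*(2*k+1) = 2*n*(2*m+1) + (k-m)) ∧
    (¬ ∃ s n : ℤ, 1 ≤ s ∧ s ≤ m ∧ k/2+1 ≤ n ∧ n ≤ k ∧
      (2*m+1-s)*(2*k+1) = 2*n*(2*m+1) - (k-m)) := by
  have hcop : IsCoprime (2*m+1 : ℤ) (2*k+1) := by
    rw [Int.isCoprime_iff_gcd_eq_one]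
    have h1 : (Int.gcd (2*m+1) (2*k+1) : ℤ) ∣ (Int.gcd (2*(2*m+1)) (2*k+1) : ℤ) := by
      apply Int.dvd_coe_gcd
      · exact (Int.gcd_dvd_left _ _).trans ⟨2, by ring⟩
      · exact Int.gcd_dvd_right _ _
    rw [hgcd] at h1
    have h2 := Int.le_of_dvd one_pos h1
    have h3 : Int.gcd (2*m+1) (2*k+1) ≠ 0 := by
      intro h
      rw [Int.gcd_eq_zero_iff] at h
      omega
    omega
  obtain ⟨j, hj⟩ := hke
  constructor
  · rintro ⟨s, n, hs1, hs2, hn1, hn2, heq⟩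
    have hdvd : (2*m+1 : ℤ) ∣ (2*(2*m+1-s)-1)*(2*k+1) := by
      refine ⟨4*n-1, by linarith [heq]⟩
    have h2 : (2*m+1 : ℤ) ∣ (2*(2*m+1-s)-1) :=
      hcop.dvd_of_dvd_mul_right hdvd
    have h3 : (2*m+1 : ℤ) ∣ (2*s+1) := by
      have : (2*s+1 : ℤ) = 2*(2*m+1) - (2*(2*m+1-s)-1) := by ring
      rw [this]
      exact dvd_sub ⟨2, by ring⟩ h2
    have h4 : (2*m+1 : ℤ) ≤ 2*s+1 := Int.le_of_dvd (by omega) h3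
    have hsm : s = m := by omega
    rw [hsm] at heq
    have : 2*n = k+1 := by
      have h5 : (2*m+1) * (2*n) = (2*m+1) * (k+1) := by linarith [heq]
      exact mul_left_cancel₀ (by omega) h5
    omega
  · rintro ⟨s, n, hs1, hs2, hn1, hn2, heq⟩
    have hdvd : (2*m+1 : ℤ) ∣ (2*(2*m+1-s)+1)*(2*k+1) := by
      refine ⟨4*n+1, by linarith [heq]⟩
    have h2 : (2*m+1 : ℤ) ∣ (2*(2*m+1-s)+1) :=
      hcop.dvd_of_dvd_mul_right hdvd
    have h3 : (2*m+1 : ℤ) ∣ (2*s-1) := by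
      have : (2*s-1 : ℤ) = 2*(2*m+1) - (2*(2*m+1-s)+1) := by ring
      rw [this]
      exact dvd_sub ⟨2, by ring⟩ h2
    have h4 : (2*m+1 : ℤ) ≤ 2*s-1 := Int.le_of_dvd (by omega) h3
    omega
end

section
/- Let k be an even positive integer and m a positive integer with k > m and gcd(k-m, 2k+1) = 1. Define φ: {1,…,2k+1} → {-1,1} by φ(n) = 1 if n ≡ 0 or 1 (mod 4) and φ(n) = -1 if n ≡ 2 or 3 (mod 4). Then ∑_{n=1}^{2k+1} φ(n)·⌊n(k-m)/(2k+1)⌋ = k - m. -/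
noncomputable section

def phi (n : ℤ) : ℤ := if n % 4 = 0 ∨ n % 4 = 1 then 1 else -1

lemma phi_eq_one {n : ℤ} (h : n % 4 = 0 ∨ n % 4 = 1) : phi n = 1 := if_pos h

lemma phi_eq_neg {n : ℤ} (h : ¬(n % 4 = 0 ∨ n % 4 = 1)) : phi n = -1 := if_neg h

lemma sum_step (g : ℤ → ℤ) (a b : ℤ) (h : a ≤ b + 1) :
    ∑ n ∈ Finset.Icc a (b+1), g n = (∑ n ∈ Finset.Icc a b, g n) + g (b+1) := by
  have hins : Finset.Icc a (b+1) = insert (b+1) (Finset.Icc a b) := by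
    ext x
    simp only [Finset.mem_Icc, Finset.mem_insert]
    omega
  rw [hins, Finset.sum_insert (by simp only [Finset.mem_Icc]; omega), add_comm]

lemma sumA (j : ℤ) (hj : 0 ≤ j) :
    ∑ n ∈ Finset.Icc (1:ℤ) (4*j+1), phi n * n = 4*j+1 := by
  refine Int.le_induction (motive := fun j _ => ∑ n ∈ Finset.Icc (1:ℤ) (4*j+1), phi n * n = 4*j+1)
    ?_ ?_ j hj
  · show ∑ n ∈ Finset.Icc (1:ℤ) (4*0+1), phi n * n = 4*0+1
    rw [show (4*(0:ℤ)+1) = 1 from by norm_num, Finset.Icc_self, Finset.sum_singleton,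
      show phi 1 = 1 from by decide]
    norm_num
  · intro j hj ih
    show ∑ n ∈ Finset.Icc (1:ℤ) (4*(j+1)+1), phi n * n = 4*(j+1)+1
    rw [show (4*(j+1)+1 : ℤ) = 4*j+1+1+1+1+1 from by ring]
    rw [sum_step _ _ _ (by omega), sum_step _ _ _ (by omega),
        sum_step _ _ _ (by omega), sum_step _ _ _ (by omega), ih]
    have p2 : phi (4*j+1+1) = -1 := phi_eq_neg (by omega)
    have p3 : phi (4*j+1+1+1) = -1 := phi_eq_neg (by omega)
    have p4 : phi (4*j+1+1+1+1) = 1 := phi_eq_one (by omega)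
    have p5 : phi (4*j+1+1+1+1+1) = 1 := phi_eq_one (by omega)
    rw [p2, p3, p4, p5]
    ring

lemma sumB (j : ℤ) (hj : 0 ≤ j) :
    ∑ n ∈ Finset.Icc (1:ℤ) (4*j), phi n = 0 := by
  refine Int.le_induction (motive := fun j _ => ∑ n ∈ Finset.Icc (1:ℤ) (4*j), phi n = 0)
    ?_ ?_ j hj
  · show ∑ n ∈ Finset.Icc (1:ℤ) (4*0), phi n = 0
    rw [show (4*(0:ℤ)) = 0 from by norm_num, Finset.Icc_eq_empty (by omega), Finset.sum_empty]
  · intro j hj ih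
    show ∑ n ∈ Finset.Icc (1:ℤ) (4*(j+1)), phi n = 0
    rw [show (4*(j+1) : ℤ) = 4*j+1+1+1+1 from by ring]
    rw [sum_step _ _ _ (by omega), sum_step _ _ _ (by omega),
        sum_step _ _ _ (by omega), sum_step _ _ _ (by omega), ih]
    have p1 : phi (4*j+1) = 1 := phi_eq_one (by omega)
    have p2 : phi (4*j+1+1) = -1 := phi_eq_neg (by omega)
    have p3 : phi (4*j+1+1+1) = -1 := phi_eq_neg (by omega)
    have p4 : phi (4*j+1+1+1+1) = 1 := phi_eq_one (by omega)
    rw [p1, p2, p3, p4]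
    ring

lemma neg_emod' (a b : ℤ) (hb : 0 < b) (hne : a % b ≠ 0) : (-a) % b = b - a % b := by
  have h1 := Int.emod_nonneg a hb.ne'
  have h2 := Int.emod_lt_of_pos a hb
  have h3 := Int.mul_ediv_add_emod a b
  have h5 : 0 < a % b := lt_of_le_of_ne h1 (Ne.symm hne)
  have h4 : -a = (b - a % b) + b * (-(a/b) - 1) := by linear_combination h3
  rw [h4, Int.add_mul_emod_self_left,
    Int.emod_eq_of_lt (by linarith) (by linarith)]

lemma hmap (k : ℤ) :
    (Finset.Icc (1:ℤ) (2*k)).map ⟨fun n => 2*k+1-n, sub_right_injective⟩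
      = Finset.Icc 1 (2*k) := by
  ext x
  simp only [Finset.mem_map, Finset.mem_Icc, Function.Embedding.coeFn_mk]
  constructor
  · rintro ⟨a, ⟨ha1, ha2⟩, rfl⟩; omega
  · intro hx; exact ⟨2*k+1-x, by omega, by omega⟩

lemma sumC (k m : ℤ) (hm : 1 ≤ m) (hk : m < k) (j : ℤ) (hjk : k = j + j)
    (hgcd : Int.gcd (k - m) (2*k+1) = 1) :
    ∑ n ∈ Finset.Icc (1:ℤ) (2*k+1), phi n * (n*(k-m) % (2*k+1)) = 0 := by
  have hN : (0:ℤ) < 2*k+1 := by omega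
  rw [sum_step _ _ _ (by omega), Int.mul_emod_right, mul_zero, add_zero]
  have hinv : ∑ n ∈ Finset.Icc (1:ℤ) (2*k), phi n * (n*(k-m) % (2*k+1))
      = ∑ n ∈ Finset.Icc (1:ℤ) (2*k), phi n * ((2*k+1) - n*(k-m) % (2*k+1)) := by
    conv_lhs => rw [← hmap k]
    rw [Finset.sum_map]
    refine Finset.sum_congr rfl fun n hn => ?_
    simp only [Function.Embedding.coeFn_mk]
    have hn' : 1 ≤ n ∧ n ≤ 2*k := Finset.mem_Icc.mp hn
    have hne : n*(k-m) % (2*k+1) ≠ 0 := by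
      intro h0
      have hdvd : (2*k+1) ∣ n*(k-m) := Int.dvd_of_emod_eq_zero h0
      have hcop : IsCoprime (2*k+1 : ℤ) (k-m) := by
        rw [Int.isCoprime_iff_gcd_eq_one, Int.gcd_comm]; exact hgcd
      have hdn : (2*k+1) ∣ n := hcop.dvd_of_dvd_mul_right hdvd
      have := Int.le_of_dvd (by omega) hdn
      omega
    have hphi : phi (2*k+1-n) = phi n := by
      by_cases h : n % 4 = 0 ∨ n % 4 = 1
      · rw [phi_eq_one h, phi_eq_one (by omega)]
      · rw [phi_eq_neg h, phi_eq_neg (by omega)]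
    have hmod : (2*k+1-n)*(k-m) % (2*k+1) = (2*k+1) - n*(k-m) % (2*k+1) := by
      have h1 : (2*k+1-n)*(k-m) = -(n*(k-m)) + (2*k+1)*(k-m) := by ring
      rw [h1, Int.add_mul_emod_self_left, neg_emod' _ _ hN hne]
    rw [hphi, hmod]
  have hexp : ∑ n ∈ Finset.Icc (1:ℤ) (2*k), phi n * ((2*k+1) - n*(k-m) % (2*k+1))
      = (2*k+1) * (∑ n ∈ Finset.Icc (1:ℤ) (2*k), phi n)
        - ∑ n ∈ Finset.Icc (1:ℤ) (2*k), phi n * (n*(k-m) % (2*k+1)) := by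
    rw [Finset.mul_sum, ← Finset.sum_sub_distrib]
    exact Finset.sum_congr rfl fun n _ => by ring
  have hB : ∑ n ∈ Finset.Icc (1:ℤ) (2*k), phi n = 0 := by
    rw [show (2*k : ℤ) = 4*j from by omega]
    exact sumB j (by omega)
  rw [hB, mul_zero] at hexp
  omega

lemma floorInt (a b : ℤ) (hb : 0 < b) : ⌊(a:ℝ)/(b:ℝ)⌋ = a / b := by
  obtain ⟨n, rfl⟩ := Int.eq_ofNat_of_zero_le hb.le
  have h1 : ((((a : ℚ) / (n : ℚ)) : ℚ) : ℝ) = (a:ℝ)/(((n:ℤ)):ℝ) := by push_cast; ring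
  rw [← h1, Rat.floor_cast, Rat.floor_intCast_div_natCast]

theorem stmt_12 (k m : ℤ) (hm : 1 ≤ m) (hk : m < k) (hke : Even k)
    (hgcd : Int.gcd (k - m) (2*k+1) = 1) :
    ∑ n ∈ Finset.Icc (1 : ℤ) (2*k+1),
      (if n % 4 = 0 ∨ n % 4 = 1 then (1 : ℤ) else -1) * ⌊((n*(k-m) : ℝ))/(2*k+1)⌋
      = k - m := by
  obtain ⟨j, hjk⟩ := hke
  have hN : (0:ℤ) < 2*k+1 := by omega
  have hfloor : ∀ n ∈ Finset.Icc (1:ℤ) (2*k+1),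
      (if n % 4 = 0 ∨ n % 4 = 1 then (1 : ℤ) else -1) * ⌊((n*(k-m) : ℝ))/(2*k+1)⌋
        = phi n * ((n*(k-m)) / (2*k+1)) := by
    intro n _
    have h1 : ((n*(k-m) : ℝ))/(2*(k:ℝ)+1) = (((n*(k-m) : ℤ)):ℝ)/((((2*k+1 : ℤ))):ℝ) := by
      push_cast; ring
    rw [h1, floorInt _ _ hN]
    rfl
  rw [Finset.sum_congr rfl hfloor]
  refine mul_left_cancel₀ (a := (2*k+1 : ℤ)) (by omega) ?_
  rw [Finset.mul_sum]
  have hterm : ∀ n ∈ Finset.Icc (1:ℤ) (2*k+1),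
      (2*k+1) * (phi n * (n*(k-m)/(2*k+1)))
        = phi n * (n*(k-m)) - phi n * (n*(k-m) % (2*k+1)) := by
    intro n _
    have h := Int.mul_ediv_add_emod (n*(k-m)) (2*k+1)
    linear_combination phi n * h
  rw [Finset.sum_congr rfl hterm, Finset.sum_sub_distrib]
  have hA : ∑ n ∈ Finset.Icc (1:ℤ) (2*k+1), phi n * (n*(k-m)) = (2*k+1) * (k-m) := by
    have h1 : ∀ n ∈ Finset.Icc (1:ℤ) (2*k+1), phi n * (n*(k-m)) = (phi n * n) * (k-m) :=
      fun n _ => by ring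
    rw [Finset.sum_congr rfl h1, ← Finset.sum_mul,
        show (2*k+1 : ℤ) = 4*j+1 from by omega, sumA j (by omega)]
  rw [hA, sumC k m hm hk j hjk hgcd]
  ring

end
end

section
/- Let k > m ≥ 1, k even, gcd(4m, 2k+1) = 1, a = 1/(2m), b = (2k+1)/2. Define Φ̃_{s,n} = ∑_{l∈ℤ} Q₂(2l + s/(2m) - 2n/(2k+1)) for 0 ≤ s ≤ 4m-1, 1 ≤ n ≤ 2k, and Ã_{s,n} = Φ̃_{s,n} - Φ̃_{s,2k+1-n}. Then Ã_{s,n} = Ã_{2m-s,n} for all 1 ≤ s ≤ m-1 and 1 ≤ n ≤ k; consequently the (2m-1) × k matrix Ã = [Ã_{s,n}]_{1≤s≤2m-1, 1≤n≤k} has rank at most k-1. -/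
/-!
Write `F` for the 2-periodization of the hat function `Q₂`, so that `Φ s n = F (t - u)` with
`t = s / (2m)` and `u = 2n / (2k+1)`, and `Φ s (2k+1-n) = F (t + u - 2) = F (t + u)`.
`F` is the triangle wave, equal to `1 - t` on `[0, 1]`; it is even and 2-periodic, whence
`F (1 - x) = 1 - F x`. Replacing `s` by `2m - s` replaces `t` by `1 - t`, so
`Ã_{2m-s,n} = F (1 - (t + u)) - F (1 - (t - u)) = F (t - u) - F (t + u) = Ã_{s,n}`.
Rows `s` and `2m - s` of `Ã` therefore agree, so `Ã` has at most `m ≤ k - 1` distinct rows.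
-/

open Function Set

noncomputable def periodize (p : ℝ) (f : ℝ → ℝ) (t : ℝ) : ℝ := ∑' l : ℤ, f (l * p + t)

lemma periodic_periodize (p : ℝ) (f : ℝ → ℝ) : Periodic (periodize p f) p := fun t => by
  unfold periodize
  rw [← (Equiv.addRight 1).tsum_eq fun l : ℤ => f (l * p + t)]
  refine tsum_congr fun l => congrArg f ?_
  push_cast [Equiv.coe_addRight]
  ring

lemma even_periodize {f : ℝ → ℝ} (hf : f.Even) (p : ℝ) : (periodize p f).Even :=
  fun t => by
    unfold periodize
    rw [← (Equiv.neg ℤ).tsum_eq]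
    refine tsum_congr fun l => ?_
    rw [Equiv.neg_apply, ← hf]
    push_cast
    ring_nf

noncomputable def hat (x : ℝ) : ℝ := if |x| ≤ 1 then 1 - |x| else 0

lemma hat_even : hat.Even := fun x => by simp only [hat, abs_neg]

lemma hat_eq_zero_of_one_le_abs {x : ℝ} (hx : 1 ≤ |x|) : hat x = 0 := by
  unfold hat
  split_ifs with h
  · linarith
  · rfl

lemma periodize_hat_of_mem_Icc {t : ℝ} (ht : t ∈ Icc 0 1) : periodize 2 hat t = 1 - t := by
  obtain ⟨h0, h1⟩ := ht
  unfold periodize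
  rw [tsum_eq_single 0 fun l hl => hat_eq_zero_of_one_le_abs ?_]
  · simp [hat, abs_of_nonneg h0, h1]
  · rcases (by omega : l ≤ -1 ∨ 1 ≤ l) with hl | hl
    · have : (l : ℝ) ≤ -1 := by exact_mod_cast hl
      rw [abs_of_neg (by linarith)]
      linarith
    · have : (1 : ℝ) ≤ l := by exact_mod_cast hl
      rw [abs_of_pos (by linarith)]
      linarith

lemma one_sub_of_periodic_of_even {F : ℝ → ℝ} (hper : Periodic F 2) (heven : F.Even)
    (hF : ∀ t ∈ Icc (0 : ℝ) 1, F t = 1 - t) (x : ℝ) : F (1 - x) = 1 - F x := by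
  have hG : Periodic (fun y => F (1 - y) + F y) 2 := fun y => by
    simp only [sub_add_eq_sub_sub, hper.sub_eq, hper y]
  suffices ∀ y ∈ Ico (0 : ℝ) 2, F (1 - y) + F y = 1 by
    obtain ⟨y, hy, hxy⟩ := hG.exists_mem_Ico₀ two_pos x
    linarith [this y hy]
  rintro y ⟨h0, h2⟩
  rcases le_total y 1 with h1 | h1
  · rw [hF y ⟨h0, h1⟩, hF (1 - y) ⟨by linarith, by linarith⟩]
    ring
  · rw [← heven (1 - y), neg_sub, ← hper.sub_eq y, ← heven (y - 2), neg_sub,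
      hF (y - 1) ⟨by linarith, by linarith⟩, hF (2 - y) ⟨by linarith, by linarith⟩]
    ring

lemma periodize_hat_one_sub (x : ℝ) : periodize 2 hat (1 - x) = 1 - periodize 2 hat x :=
  one_sub_of_periodic_of_even (periodic_periodize 2 hat) (even_periodize hat_even 2)
    (fun _ => periodize_hat_of_mem_Icc) x

lemma periodize_hat_sub_sub_periodize_hat_add (t u : ℝ) :
    periodize 2 hat (1 - t - u) - periodize 2 hat (1 - t + u) =
      periodize 2 hat (t - u) - periodize 2 hat (t + u) := by
  rw [sub_sub, sub_add, periodize_hat_one_sub, periodize_hat_one_sub]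
  ring

lemma Matrix.rank_le_of_row_eq_of_add_eq {n R : Type*} [Fintype n] [CommSemiring R]
    [StrongRankCondition R] {m : ℕ} (M : Matrix (Fin (2 * m - 1)) n R)
    (hM : ∀ i j : Fin (2 * m - 1), (i : ℕ) + j = 2 * m - 2 → M i = M j) : M.rank ≤ m := by
  let σ : Fin (2 * m - 1) → Fin m := fun i => ⟨min i (2 * m - 2 - i), by have := i.isLt; omega⟩
  let N : Matrix (Fin m) n R := M.submatrix (Fin.castLE (by omega)) id
  have hMN : M = N.submatrix σ id := by
    ext i j
    rcases le_total (i : ℕ) (2 * m - 2 - i) with h | h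
    · simp [N, σ, min_eq_left h]
    · simp [N, σ, min_eq_right h, hM i ⟨2 * m - 2 - i, by omega⟩ (by dsimp only; omega)]
  calc M.rank ≤ N.rank := hMN ▸ N.rank_submatrix_le σ id
    _ ≤ m := by simpa using N.rank_le_card_height

theorem stmt_17_general (k m : ℕ) (hm : 1 ≤ m) (hk : m < k)
    (Q₂ : ℝ → ℝ) (hQ : ∀ x, Q₂ x = if |x| ≤ 1 then 1 - |x| else 0)
    (Φ : ℤ → ℤ → ℝ)
    (hΦ : ∀ s n : ℤ, Φ s n = ∑' l : ℤ, Q₂ (2*l + (s : ℝ)/(2*m) - 2*n/(2*k+1)))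
    (A : ℤ → ℤ → ℝ) (hA : ∀ s n : ℤ, A s n = Φ s n - Φ s (2*k+1-n)) :
    (∀ s n : ℤ, 1 ≤ s → s ≤ m-1 → 1 ≤ n → n ≤ k →
      A s n = A (2*m-s) n) ∧
    Matrix.rank (Matrix.of fun (i : Fin (2*m-1)) (j : Fin k) =>
      A ((i : ℕ)+1) ((j : ℕ)+1)) ≤ k-1 := by
  obtain rfl : Q₂ = hat := funext hQ
  have hm₀ : (m : ℝ) ≠ 0 := Nat.cast_ne_zero.mpr (by omega)
  have hΦF : ∀ s n : ℤ, Φ s n = periodize 2 hat ((s : ℝ) / (2 * m) - 2 * n / (2 * k + 1)) :=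
    fun s n => (hΦ s n).trans <| tsum_congr fun l => congrArg hat (by ring)
  have hAF : ∀ s n : ℤ, A s n = periodize 2 hat ((s : ℝ) / (2 * m) - 2 * n / (2 * k + 1)) -
      periodize 2 hat ((s : ℝ) / (2 * m) + 2 * n / (2 * k + 1)) := fun s n => by
    rw [hA, hΦF, hΦF, ← (periodic_periodize 2 hat).sub_eq (_ / _ + _ / _)]
    congr 2
    field_simp
    push_cast
    ring
  have hsymm : ∀ s n : ℤ, A s n = A (2 * m - s) n := fun s n => by
    rw [hAF, hAF, ← periodize_hat_sub_sub_periodize_hat_add, Int.cast_sub]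
    congr 3 <;> field_simp <;> push_cast <;> ring
  refine ⟨fun s n _ _ _ _ => hsymm s n, ?_⟩
  calc _ ≤ m := Matrix.rank_le_of_row_eq_of_add_eq _ fun i j hij => funext fun c => by
        simp only [Matrix.of_apply]
        rw [hsymm]
        congr 1
        omega
    _ ≤ k - 1 := by omega

theorem stmt_17 (k m : ℕ) (hm : 1 ≤ m) (hk : m < k) (hke : Even k)
    (hgcd : Nat.gcd (4*m) (2*k+1) = 1)
    (Q₂ : ℝ → ℝ) (hQ : ∀ x, Q₂ x = if |x| ≤ 1 then 1 - |x| else 0)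
    (Φ : ℤ → ℤ → ℝ)
    (hΦ : ∀ s n : ℤ, Φ s n = ∑' l : ℤ, Q₂ (2*l + (s : ℝ)/(2*m) - 2*n/(2*k+1)))
    (A : ℤ → ℤ → ℝ) (hA : ∀ s n : ℤ, A s n = Φ s n - Φ s (2*k+1-n)) :
    (∀ s n : ℤ, 1 ≤ s → s ≤ m-1 → 1 ≤ n → n ≤ k →
      A s n = A (2*m-s) n) ∧
    Matrix.rank (Matrix.of fun (i : Fin (2*m-1)) (j : Fin k) =>
      A ((i : ℕ)+1) ((j : ℕ)+1)) ≤ k-1 :=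
  stmt_17_general k m hm hk Q₂ hQ Φ hΦ A hA
end
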